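/- arXiv:0809.0745 — 4 statements merged into one kernel-verified Lean document; each statement's English description precedes it below -/
import Mathlib

section
/- Let 0 < p ≤ 1 and let A be an M×N real matrix with restricted isometry constants δ_S. Suppose k > 1 with kS ∈ ℕ and δ_{kS} + k^{2/p - 1} δ_{(k+1)S} < k^{2/p - 1} − 1. Then for every S-sparse x ∈ ℝ^N, x is the unique minimizer of ‖y‖_p subject to Ay = Ax; i.e., if ‖z‖_p ≤ ‖x‖_p and Az = Ax then z = x. -/
noncomputable def lpNorm {N : ℕ} (p : ℝ) (x : Fin N → ℝ) : ℝ :=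
  (∑ i, |x i| ^ p) ^ (1 / p)

noncomputable def l2Norm {M : ℕ} (x : Fin M → ℝ) : ℝ :=
  Real.sqrt (∑ i, (x i) ^ 2)

/-- `x` has at most `S` nonzero entries. -/
def IsSparse {N : ℕ} (S : ℕ) (x : Fin N → ℝ) : Prop :=
  {i | x i ≠ 0}.ncard ≤ S

/-!
Put `h = z - x`, which lies in the kernel of `A`, and let `T` be the support of `x`. Minimality
of `‖z‖_p` and the subadditivity of `t ↦ t ^ p` for `p ≤ 1` give the cone condition
`‖h_{Tᶜ}‖_p ≤ ‖h_T‖_p`. Cut `Tᶜ` into blocks `B₀, B₁, …` of `kS` entries of decreasing `|h|`.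
Every entry on `B_{j+1}` is at most the `p`-mean of `|h|` over `B_j`, so
`∑ⱼ ‖h_{B_{j+1}}‖₂ ≤ (kS)^(1/2 - 1/p) ‖h_{Tᶜ}‖_p ≤ k^(1/2 - 1/p) ‖h_{T ∪ B₀}‖₂`, the last step by
the cone condition and Hölder's inequality on `T`. Since `A h = 0`, the restricted isometry
property on `T ∪ B₀` and on the blocks `B_{j+1}` yields
`√(1 - δ_{kS+S}) ‖h_{T ∪ B₀}‖₂ ≤ √(1 + δ_{kS}) k^(1/2 - 1/p) ‖h_{T ∪ B₀}‖₂`. The hypothesis on `δ`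
says exactly that the constant on the right is smaller, so `h` vanishes on `T`, and then
everywhere by the cone condition.
-/

open Finset Real

namespace Finset

variable {ι α : Type*} [DecidableEq ι] [LinearOrder α]

theorem exists_subset_card_eq_forall_sdiff_le (f : ι → α) (R : Finset ι) :
    ∀ {L : ℕ}, L ≤ #R → ∃ B ⊆ R, #B = L ∧ ∀ b ∈ B, ∀ r ∈ R \ B, f r ≤ f b
  | 0, _ => ⟨∅, empty_subset R, card_empty, by simp⟩
  | L + 1, hL => by
    obtain ⟨B, hBR, hB, hdom⟩ := exists_subset_card_eq_forall_sdiff_le f R (L := L) (by omega)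
    obtain ⟨r, hr, hrmax⟩ := (R \ B).exists_max_image f
      (by rw [← card_pos, card_sdiff_of_subset hBR]; omega)
    rw [mem_sdiff] at hr
    refine ⟨insert r B, insert_subset hr.1 hBR, by rw [card_insert_of_notMem hr.2, hB], ?_⟩
    intro b hb r' hr'
    have hr'B : r' ∈ R \ B := by
      simp only [mem_sdiff, mem_insert, not_or] at hr' ⊢
      exact ⟨hr'.1, hr'.2.2⟩
    rcases mem_insert.1 hb with rfl | hb
    · exact hrmax r' hr'B
    · exact hdom b hb r' hr'B

end Finset

section SortedBlocks

variable {ι α : Type*} [DecidableEq ι] [LinearOrder α]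

/-- The blocks `T₁, T₂, …` of the usual restricted isometry argument: `R` listed by decreasing
`f` and cut into consecutive pieces of `L` elements. -/
structure IsSortedBlockPartition (f : ι → α) (L : ℕ) (R : Finset ι) (B : ℕ → Finset ι) :
    Prop where
  biUnion_eq : ∀ n, #R < n → (range n).biUnion B = R
  pairwise_disjoint : Pairwise fun i j => Disjoint (B i) (B j)
  card_le : ∀ j, #(B j) ≤ L
  card_eq_of_nonempty : ∀ j, (B (j + 1)).Nonempty → #(B j) = L
  le_of_mem_succ : ∀ j, ∀ b ∈ B j, ∀ b' ∈ B (j + 1), f b' ≤ f b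

namespace IsSortedBlockPartition

variable {f : ι → α} {L : ℕ} {R : Finset ι} {B : ℕ → Finset ι}

theorem subset (hB : IsSortedBlockPartition f L R B) (j : ℕ) : B j ⊆ R := by
  rw [← hB.biUnion_eq (max j #R + 1) (by omega)]
  exact subset_biUnion_of_mem B (mem_range.2 (by omega))

theorem cons (hL : 0 < L) {B₀ : Finset ι} (hB₀R : B₀ ⊆ R) (hB₀ : #B₀ = L)
    (hdom : ∀ b ∈ B₀, ∀ r ∈ R \ B₀, f r ≤ f b) (hB : IsSortedBlockPartition f L (R \ B₀) B) :
    IsSortedBlockPartition f L R (fun | 0 => B₀ | j + 1 => B j) where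
  biUnion_eq n hn := by
    obtain ⟨m, rfl⟩ : ∃ m, n = m + 1 := ⟨n - 1, by omega⟩
    rw [range_add_one', biUnion_insert, map_eq_image, image_biUnion]
    have hm : #(R \ B₀) < m := by
      have := card_le_card hB₀R
      rw [card_sdiff_of_subset hB₀R]
      omega
    exact (congrArg (B₀ ∪ ·) (hB.biUnion_eq m hm)).trans (union_sdiff_of_subset hB₀R)
  pairwise_disjoint
    | 0, 0, h => absurd rfl h
    | 0, j + 1, _ => disjoint_of_subset_right (hB.subset j) disjoint_sdiff
    | i + 1, 0, _ => disjoint_of_subset_left (hB.subset i) sdiff_disjoint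
    | i + 1, j + 1, h => hB.pairwise_disjoint (by omega)
  card_le
    | 0 => hB₀.le
    | j + 1 => hB.card_le j
  card_eq_of_nonempty
    | 0, _ => hB₀
    | j + 1, h => hB.card_eq_of_nonempty j h
  le_of_mem_succ
    | 0, b, hb, b', hb' => hdom b hb b' (hB.subset 0 hb')
    | j + 1, b, hb, b', hb' => hB.le_of_mem_succ j b hb b' hb'

theorem sum_range_sum_eq {M : Type*} [AddCommMonoid M] (hB : IsSortedBlockPartition f L R B)
    (g : ι → M) : ∑ j ∈ range (#R + 1), ∑ i ∈ B j, g i = ∑ i ∈ R, g i := by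
  conv_rhs => rw [← hB.biUnion_eq _ (Nat.lt_succ_self _)]
  exact (sum_biUnion (hB.pairwise_disjoint.set_pairwise _)).symm

theorem indicator_eq_sum {M : Type*} [AddCommMonoid M] (hB : IsSortedBlockPartition f L R B)
    (g : ι → M) : (R : Set ι).indicator g = ∑ j ∈ range (#R + 1), (B j : Set ι).indicator g := by
  conv_lhs => rw [← hB.biUnion_eq _ (Nat.lt_succ_self _), coe_biUnion]
  simp only [mem_coe]
  rw [indicator_biUnion _ _ fun i _ j _ hij => disjoint_coe.2 (hB.pairwise_disjoint hij)]
  ext i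
  simp [Finset.sum_apply]

theorem indicator_union_add_sum [Fintype ι] {M : Type*} [AddCommMonoid M] {T : Finset ι}
    (hB : IsSortedBlockPartition f L Tᶜ B) (g : ι → M) :
    ((T ∪ B 0 : Finset ι) : Set ι).indicator g +
      ∑ j ∈ range #Tᶜ, (B (j + 1) : Set ι).indicator g = g := by
  rw [coe_union, Set.indicator_union_of_disjoint
      (disjoint_coe.2 (disjoint_of_subset_right (hB.subset 0) disjoint_compl_right)),
    ← Pi.add_def, add_assoc, add_comm ((B 0 : Set ι).indicator g),
    ← sum_range_succ' fun j => (B j : Set ι).indicator g, ← hB.indicator_eq_sum, coe_compl,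
    Set.indicator_self_add_compl]

end IsSortedBlockPartition

theorem exists_isSortedBlockPartition (f : ι → α) {L : ℕ} (hL : 0 < L) (R : Finset ι) :
    ∃ B, IsSortedBlockPartition f L R B := by
  induction R using Finset.strongInduction with
  | H R ih =>
  by_cases hR : #R ≤ L
  · refine ⟨fun | 0 => R | _ + 1 => ∅, fun n hn => ?_, ?_, ?_, ?_, ?_⟩
    · obtain ⟨m, rfl⟩ : ∃ m, n = m + 1 := ⟨n - 1, by omega⟩
      rw [range_add_one', biUnion_insert, map_eq_image, image_biUnion]
      exact union_eq_left.2 (biUnion_subset.2 fun _ _ => empty_subset R)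
    · rintro (_ | i) (_ | j) h <;> simp_all
    · rintro (_ | j) <;> simp [hR]
    · simp
    · simp
  · obtain ⟨B₀, hB₀R, hB₀, hdom⟩ :=
      R.exists_subset_card_eq_forall_sdiff_le f (L := L) (by omega)
    obtain ⟨B, hB⟩ := ih (R \ B₀) (sdiff_ssubset hB₀R (card_pos.1 (by omega)))
    exact ⟨_, .cons hL hB₀R hB₀ hdom hB⟩

end SortedBlocks

namespace Real

theorem sum_rpow_le_rpow_sum {ι : Type*} (s : Finset ι) {f : ι → ℝ} (hf : ∀ i ∈ s, 0 ≤ f i)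
    {q : ℝ} (hq : 1 ≤ q) : ∑ i ∈ s, f i ^ q ≤ (∑ i ∈ s, f i) ^ q := by
  induction s using Finset.cons_induction with
  | empty => simp [zero_rpow (by linarith : q ≠ 0)]
  | cons a s ha ih =>
    rw [sum_cons, sum_cons]
    have hfs : ∀ i ∈ s, 0 ≤ f i := fun i hi => hf i (mem_cons_of_mem hi)
    calc f a ^ q + ∑ i ∈ s, f i ^ q ≤ f a ^ q + (∑ i ∈ s, f i) ^ q := by gcongr; exact ih hfs
      _ ≤ (f a + ∑ i ∈ s, f i) ^ q :=
        add_rpow_le_rpow_add (hf a (mem_cons_self a s)) (sum_nonneg hfs) hq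

end Real

section BlockEstimates

variable {ι : Type*} {h : ι → ℝ} {p : ℝ}

theorem sqrt_sum_sq_le_of_forall_abs_le {B B' : Finset ι} (hp : 0 < p) (hcard : #B' ≤ #B)
    (hdom : ∀ b ∈ B, ∀ b' ∈ B', |h b'| ≤ |h b|) :
    √(∑ i ∈ B', h i ^ 2) ≤ (#B : ℝ) ^ (1 / 2 - 1 / p) * (∑ i ∈ B, |h i| ^ p) ^ (1 / p) := by
  rcases B'.eq_empty_or_nonempty with rfl | hB'
  · simp only [sum_empty, sqrt_zero]
    positivity
  have hB : (0 : ℝ) < #B := by exact_mod_cast (card_pos.2 hB').trans_le hcard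
  set P := ∑ i ∈ B, |h i| ^ p
  set μ := (P / #B) ^ (1 / p) with hμ_def
  have hμ : ∀ b' ∈ B', |h b'| ≤ μ := by
    intro b' hb'
    have hmean : (#B : ℝ) * |h b'| ^ p ≤ P := by
      simpa using sum_le_sum fun b hb => rpow_le_rpow (abs_nonneg _) (hdom b hb b' hb') hp.le
    calc |h b'| = (|h b'| ^ p) ^ (1 / p) := by
          rw [← rpow_mul (abs_nonneg _), mul_one_div_cancel hp.ne', rpow_one]
      _ ≤ μ := rpow_le_rpow (by positivity) (by rw [le_div_iff₀ hB]; linarith) (by positivity)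
  have hsq : ∑ i ∈ B', h i ^ 2 ≤ #B * μ ^ 2 :=
    calc ∑ i ∈ B', h i ^ 2 ≤ ∑ _i ∈ B', μ ^ 2 :=
          sum_le_sum fun i hi => by rw [← sq_abs]; gcongr; exact hμ i hi
      _ = #B' * μ ^ 2 := by rw [sum_const, nsmul_eq_mul]
      _ ≤ #B * μ ^ 2 := by gcongr
  calc √(∑ i ∈ B', h i ^ 2) ≤ √(#B * μ ^ 2) := sqrt_le_sqrt hsq
    _ = √(#B : ℝ) * μ := by rw [sqrt_mul hB.le, sqrt_sq (by positivity)]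
    _ = (#B : ℝ) ^ (1 / 2 - 1 / p) * P ^ (1 / p) := by
      rw [sqrt_eq_rpow, hμ_def, div_rpow (by positivity) hB.le, rpow_sub hB]
      ring

theorem rpow_sum_abs_rpow_le_mul_sqrt {T : Finset ι} {S : ℕ} (hT : #T ≤ S) (hp : 0 < p)
    (hp2 : p ≤ 2) :
    (∑ i ∈ T, |h i| ^ p) ^ (1 / p) ≤ (S : ℝ) ^ (1 / p - 1 / 2) * √(∑ i ∈ T, h i ^ 2) := by
  have hq : 1 ≤ 2 / p := by rw [le_div_iff₀ hp]; linarith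
  have hpow : ∀ i, (|h i| ^ p) ^ (2 / p) = h i ^ 2 := fun i => by
    rw [← rpow_mul (abs_nonneg _), mul_div_cancel₀ _ hp.ne', rpow_two, sq_abs]
  have hmean := rpow_sum_le_const_mul_sum_rpow_of_nonneg T hq
    (f := fun i => |h i| ^ p) fun i _ => by positivity
  simp only [hpow] at hmean
  have hP : 0 ≤ ∑ i ∈ T, |h i| ^ p := by positivity
  calc (∑ i ∈ T, |h i| ^ p) ^ (1 / p) = √((∑ i ∈ T, |h i| ^ p) ^ (2 / p)) := by
        rw [sqrt_eq_rpow, ← rpow_mul hP]; ring_nf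
    _ ≤ √((#T : ℝ) ^ (2 / p - 1) * ∑ i ∈ T, h i ^ 2) := sqrt_le_sqrt hmean
    _ = (#T : ℝ) ^ (1 / p - 1 / 2) * √(∑ i ∈ T, h i ^ 2) := by
        rw [sqrt_mul (by positivity), sqrt_eq_rpow, ← rpow_mul (by positivity)]; ring_nf
    _ ≤ (S : ℝ) ^ (1 / p - 1 / 2) * √(∑ i ∈ T, h i ^ 2) := by
        gcongr
        rw [sub_nonneg, one_div_le_one_div (by norm_num) hp]
        linarith

end BlockEstimates

namespace IsSortedBlockPartition

variable {ι : Type*} [DecidableEq ι] {h : ι → ℝ} {L : ℕ} {R : Finset ι} {B : ℕ → Finset ι}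

theorem sum_sqrt_sum_sq_le (hB : IsSortedBlockPartition (|h ·|) L R B) {p : ℝ} (hp0 : 0 < p)
    (hp1 : p ≤ 1) :
    ∑ j ∈ range #R, √(∑ i ∈ B (j + 1), h i ^ 2) ≤
      (L : ℝ) ^ (1 / 2 - 1 / p) * (∑ i ∈ R, |h i| ^ p) ^ (1 / p) := by
  have hblock : ∀ j, √(∑ i ∈ B (j + 1), h i ^ 2) ≤
      (L : ℝ) ^ (1 / 2 - 1 / p) * (∑ i ∈ B j, |h i| ^ p) ^ (1 / p) := by
    intro j
    rcases (B (j + 1)).eq_empty_or_nonempty with hempty | hne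
    · rw [hempty, sum_empty, sqrt_zero]
      positivity
    rw [← hB.card_eq_of_nonempty j hne]
    exact sqrt_sum_sq_le_of_forall_abs_le hp0
      ((hB.card_le _).trans (hB.card_eq_of_nonempty j hne).ge) (hB.le_of_mem_succ j)
  have hP : ∀ j, 0 ≤ ∑ i ∈ B j, |h i| ^ p := fun j => by positivity
  calc ∑ j ∈ range #R, √(∑ i ∈ B (j + 1), h i ^ 2)
      ≤ (L : ℝ) ^ (1 / 2 - 1 / p) * ∑ j ∈ range #R, (∑ i ∈ B j, |h i| ^ p) ^ (1 / p) := by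
        rw [mul_sum]
        exact sum_le_sum fun j _ => hblock j
    _ ≤ (L : ℝ) ^ (1 / 2 - 1 / p) * (∑ j ∈ range #R, ∑ i ∈ B j, |h i| ^ p) ^ (1 / p) := by
        gcongr
        exact sum_rpow_le_rpow_sum _ (fun j _ => hP j) (by rw [le_div_iff₀ hp0]; linarith)
    _ ≤ (L : ℝ) ^ (1 / 2 - 1 / p) * (∑ i ∈ R, |h i| ^ p) ^ (1 / p) := by
        rw [← hB.sum_range_sum_eq, sum_range_succ]
        gcongr
        exact le_add_of_nonneg_right (hP _)

theorem sum_sqrt_sum_sq_le_mul_sqrt [Fintype ι] {T : Finset ι} {S : ℕ}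
    (hB : IsSortedBlockPartition (|h ·|) L Tᶜ B) (hT : #T ≤ S) {p : ℝ} (hp0 : 0 < p)
    (hp1 : p ≤ 1) (hcone : ∑ i ∈ Tᶜ, |h i| ^ p ≤ ∑ i ∈ T, |h i| ^ p) :
    ∑ j ∈ range #Tᶜ, √(∑ i ∈ B (j + 1), h i ^ 2) ≤
      ((S : ℝ) / L) ^ (1 / p - 1 / 2) * √(∑ i ∈ T ∪ B 0, h i ^ 2) := by
  have hC : (L : ℝ) ^ (1 / 2 - 1 / p) * (S : ℝ) ^ (1 / p - 1 / 2) =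
      ((S : ℝ) / L) ^ (1 / p - 1 / 2) := by
    rw [div_rpow (Nat.cast_nonneg _) (Nat.cast_nonneg _), ← neg_sub, rpow_neg (Nat.cast_nonneg _)]
    ring
  rw [← hC, mul_assoc]
  calc ∑ j ∈ range #Tᶜ, √(∑ i ∈ B (j + 1), h i ^ 2)
      ≤ (L : ℝ) ^ (1 / 2 - 1 / p) * (∑ i ∈ Tᶜ, |h i| ^ p) ^ (1 / p) :=
        hB.sum_sqrt_sum_sq_le hp0 hp1
    _ ≤ (L : ℝ) ^ (1 / 2 - 1 / p) * (∑ i ∈ T, |h i| ^ p) ^ (1 / p) := by gcongr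
    _ ≤ (L : ℝ) ^ (1 / 2 - 1 / p) * ((S : ℝ) ^ (1 / p - 1 / 2) * √(∑ i ∈ T, h i ^ 2)) := by
        gcongr
        exact rpow_sum_abs_rpow_le_mul_sqrt hT hp0 (by linarith)
    _ ≤ (L : ℝ) ^ (1 / 2 - 1 / p) * ((S : ℝ) ^ (1 / p - 1 / 2) * √(∑ i ∈ T ∪ B 0, h i ^ 2)) := by
        gcongr
        exact subset_union_left

end IsSortedBlockPartition

section SparseRecovery

open Matrix

variable {M N : ℕ}

theorem l2Norm_nonneg (y : Fin M → ℝ) : 0 ≤ l2Norm y := sqrt_nonneg _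

theorem l2Norm_eq_norm (y : Fin M → ℝ) : l2Norm y = ‖WithLp.toLp 2 y‖ := by
  simp [l2Norm, EuclideanSpace.norm_eq]

theorem l2Norm_eq_zero {y : Fin M → ℝ} : l2Norm y = 0 ↔ y = 0 := by
  rw [l2Norm_eq_norm, norm_eq_zero, WithLp.toLp_eq_zero]

theorem l2Norm_sum_le {ι : Type*} (s : Finset ι) (v : ι → Fin M → ℝ) :
    l2Norm (∑ j ∈ s, v j) ≤ ∑ j ∈ s, l2Norm (v j) := by
  simp only [l2Norm_eq_norm, WithLp.toLp_sum]
  exact norm_sum_le _ _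

theorem l2Norm_neg (y : Fin M → ℝ) : l2Norm (-y) = l2Norm y := by
  simp [l2Norm]

theorem l2Norm_indicator (s : Finset (Fin N)) (h : Fin N → ℝ) :
    l2Norm ((s : Set (Fin N)).indicator h) = √(∑ i ∈ s, h i ^ 2) := by
  simp [l2Norm, Set.indicator_apply, apply_ite (· ^ 2), sum_ite_mem]

theorem isSparse_iff {S : ℕ} {c : Fin N → ℝ} :
    IsSparse S c ↔ #(univ.filter fun i => c i ≠ 0) ≤ S := by
  rw [IsSparse, ← Set.ncard_coe_finset, coe_filter]
  simp only [mem_univ, true_and]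

theorem isSparse_indicator {S : ℕ} {s : Finset (Fin N)} (hs : #s ≤ S) (h : Fin N → ℝ) :
    IsSparse S ((s : Set (Fin N)).indicator h) := by
  refine isSparse_iff.2 ((card_le_card fun i hi => ?_).trans hs)
  by_contra his
  simp [his] at hi

theorem nonneg_of_forall_isSparse_l2Norm_mulVec_sq_le (A : Matrix (Fin M) (Fin N) ℝ) {L : ℕ}
    (hL : 0 < L) {b : ℝ} (hup : ∀ c, IsSparse L c → l2Norm (A *ᵥ c) ^ 2 ≤ b * l2Norm c ^ 2)
    (i : Fin N) : 0 ≤ b := by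
  have hsparse : IsSparse L (Pi.single i 1 : Fin N → ℝ) :=
    calc _ ≤ ({i} : Set (Fin N)).ncard :=
          Set.ncard_le_ncard (fun j hj => by by_contra h; simp_all) (Set.finite_singleton i)
      _ ≤ L := by rwa [Set.ncard_singleton]
  have hnorm : l2Norm (Pi.single i 1 : Fin N → ℝ) = 1 := by
    simp [l2Norm, Pi.single_apply]
  have := hup _ hsparse
  rw [hnorm] at this
  nlinarith [sq_nonneg (l2Norm (A *ᵥ Pi.single i 1))]

theorem sum_abs_rpow_le_of_lpNorm_le {p : ℝ} (hp : 0 < p) {x z : Fin N → ℝ}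
    (h : lpNorm p z ≤ lpNorm p x) : ∑ i, |z i| ^ p ≤ ∑ i, |x i| ^ p :=
  (rpow_le_rpow_iff (by positivity) (by positivity) (by positivity)).1 h

theorem sum_compl_abs_sub_rpow_le {ι : Type*} [Fintype ι] [DecidableEq ι] {p : ℝ} (hp0 : 0 < p)
    (hp1 : p ≤ 1) {x z : ι → ℝ} {T : Finset ι} (hxT : ∀ i ∉ T, x i = 0)
    (hzx : ∑ i, |z i| ^ p ≤ ∑ i, |x i| ^ p) :
    ∑ i ∈ Tᶜ, |z i - x i| ^ p ≤ ∑ i ∈ T, |z i - x i| ^ p := by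
  have hx : ∑ i, |x i| ^ p = ∑ i ∈ T, |x i| ^ p := by
    refine (sum_subset (subset_univ T) fun i _ hi => ?_).symm
    rw [hxT i hi, abs_zero, zero_rpow hp0.ne']
  have hz : ∑ i, |z i| ^ p = ∑ i ∈ T, |z i| ^ p + ∑ i ∈ Tᶜ, |z i - x i| ^ p := by
    rw [← sum_add_sum_compl T]
    congr 1
    exact sum_congr rfl fun i hi => by rw [hxT i (mem_compl.1 hi), sub_zero]
  have htri : ∑ i ∈ T, |x i| ^ p ≤ ∑ i ∈ T, |z i| ^ p + ∑ i ∈ T, |z i - x i| ^ p := by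
    rw [← sum_add_distrib]
    refine sum_le_sum fun i _ => ?_
    calc |x i| ^ p ≤ (|z i| + |z i - x i|) ^ p := by
          gcongr
          simpa using abs_sub (z i) (z i - x i)
      _ ≤ |z i| ^ p + |z i - x i| ^ p :=
          rpow_add_le_add_rpow (abs_nonneg _) (abs_nonneg _) hp0.le hp1
  linarith

theorem eq_zero_of_sum_compl_rpow_le {ι : Type*} [Fintype ι] [DecidableEq ι] {h : ι → ℝ} {p : ℝ}
    (hp : 0 < p) {T : Finset ι} (hcone : ∑ i ∈ Tᶜ, |h i| ^ p ≤ ∑ i ∈ T, |h i| ^ p)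
    (hT : ∀ i ∈ T, h i = 0) : h = 0 := by
  have hPT : ∑ i ∈ T, |h i| ^ p = 0 :=
    sum_eq_zero fun i hi => by rw [hT i hi, abs_zero, zero_rpow hp.ne']
  have hP : ∑ i, |h i| ^ p = 0 := by
    refine le_antisymm ?_ (by positivity)
    rw [← sum_add_sum_compl T]
    linarith
  funext i
  have := (sum_eq_zero_iff_of_nonneg fun i _ => by positivity).1 hP i (mem_univ i)
  simpa [rpow_eq_zero_iff_of_nonneg, hp.ne'] using this

theorem eq_zero_of_mulVec_eq_zero_of_sum_compl_rpow_le (A : Matrix (Fin M) (Fin N) ℝ) {p : ℝ}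
    (hp0 : 0 < p) (hp1 : p ≤ 1) {L S : ℕ} (hL : 0 < L) {a b : ℝ}
    (hlow : ∀ c, IsSparse (L + S) c → a * l2Norm c ^ 2 ≤ l2Norm (A *ᵥ c) ^ 2)
    (hup : ∀ c, IsSparse L c → l2Norm (A *ᵥ c) ^ 2 ≤ b * l2Norm c ^ 2)
    (hab : b * ((S : ℝ) / L) ^ (2 / p - 1) < a) {h : Fin N → ℝ} (hAh : A *ᵥ h = 0)
    {T : Finset (Fin N)} (hT : #T ≤ S) (hcone : ∑ i ∈ Tᶜ, |h i| ^ p ≤ ∑ i ∈ T, |h i| ^ p) :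
    h = 0 := by
  obtain hN | ⟨⟨i₀⟩⟩ := isEmpty_or_nonempty (Fin N)
  · exact Subsingleton.elim _ _
  have hb := nonneg_of_forall_isSparse_l2Norm_mulVec_sq_le A hL hup i₀
  obtain ⟨B, hB⟩ := exists_isSortedBlockPartition (|h ·|) hL Tᶜ
  set v₀ := ((T ∪ B 0 : Finset (Fin N)) : Set (Fin N)).indicator h
  set v : ℕ → Fin N → ℝ := fun j => (B (j + 1) : Set (Fin N)).indicator h
  have hAv₀ : A *ᵥ v₀ = -∑ j ∈ range #Tᶜ, A *ᵥ v j := by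
    rw [← mulVec_sum, eq_neg_iff_add_eq_zero, ← mulVec_add, hB.indicator_union_add_sum, hAh]
  have hlow' : √a * l2Norm v₀ ≤ l2Norm (A *ᵥ v₀) := by
    have hv₀ : IsSparse (L + S) v₀ :=
      isSparse_indicator ((card_union_le _ _).trans (by have := hB.card_le 0; omega)) h
    have := sqrt_le_sqrt (hlow v₀ hv₀)
    rwa [sqrt_mul' _ (sq_nonneg _), sqrt_sq (l2Norm_nonneg _), sqrt_sq (l2Norm_nonneg _)] at this
  have hup' : ∀ j, l2Norm (A *ᵥ v j) ≤ √b * l2Norm (v j) := fun j => by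
    have := sqrt_le_sqrt (hup (v j) (isSparse_indicator (hB.card_le _) h))
    rwa [sqrt_mul' _ (sq_nonneg _), sqrt_sq (l2Norm_nonneg _), sqrt_sq (l2Norm_nonneg _)] at this
  have hchain : √a * l2Norm v₀ ≤ √b * ((S : ℝ) / L) ^ (1 / p - 1 / 2) * l2Norm v₀ :=
    calc √a * l2Norm v₀ ≤ l2Norm (A *ᵥ v₀) := hlow'
      _ ≤ ∑ j ∈ range #Tᶜ, l2Norm (A *ᵥ v j) := by
        rw [hAv₀, l2Norm_neg]
        exact l2Norm_sum_le _ _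
      _ ≤ √b * ∑ j ∈ range #Tᶜ, l2Norm (v j) := by
        rw [mul_sum]
        exact sum_le_sum fun j _ => hup' j
      _ ≤ √b * ((S : ℝ) / L) ^ (1 / p - 1 / 2) * l2Norm v₀ := by
        simp only [v, v₀, l2Norm_indicator, mul_assoc]
        gcongr
        exact hB.sum_sqrt_sum_sq_le_mul_sqrt hT hp0 hp1 hcone
  have hconst : √b * ((S : ℝ) / L) ^ (1 / p - 1 / 2) < √a :=
    calc √b * ((S : ℝ) / L) ^ (1 / p - 1 / 2) = √(b * ((S : ℝ) / L) ^ (2 / p - 1)) := by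
          rw [sqrt_mul hb, sqrt_eq_rpow (_ ^ _), ← rpow_mul (by positivity)]
          ring_nf
      _ < √a := sqrt_lt_sqrt (by positivity) hab
  have hv₀ : v₀ = 0 := l2Norm_eq_zero.1 (by nlinarith [l2Norm_nonneg v₀])
  refine eq_zero_of_sum_compl_rpow_le hp0 hcone fun i hi => ?_
  simpa [v₀, hi] using congrFun hv₀ i

end SparseRecovery

theorem lp_min_exact_recovery {M N : ℕ} (p : ℝ) (hp0 : 0 < p) (hp1 : p ≤ 1)
    (A : Matrix (Fin M) (Fin N) ℝ) (δ : ℕ → ℝ)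
    (hRIP : ∀ (s : ℕ) (c : Fin N → ℝ), IsSparse s c →
      (1 - δ s) * l2Norm c ^ 2 ≤ l2Norm (A.mulVec c) ^ 2 ∧
      l2Norm (A.mulVec c) ^ 2 ≤ (1 + δ s) * l2Norm c ^ 2)
    (S : ℕ) (hS : 0 < S) (k : ℝ) (hk : 1 < k) (kS : ℕ) (hkS : (kS : ℝ) = k * S)
    (hcond : δ kS + k ^ (2 / p - 1) * δ (kS + S) < k ^ (2 / p - 1) - 1)
    (x z : Fin N → ℝ) (hx : IsSparse S x)
    (hz : lpNorm p z ≤ lpNorm p x) (hAz : A.mulVec z = A.mulVec x) :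
    z = x := by
  have hk0 : 0 < k := by linarith
  have hkS0 : 0 < kS := by exact_mod_cast (show (0 : ℝ) < kS by rw [hkS]; positivity)
  have hab : (1 + δ kS) * ((S : ℝ) / kS) ^ (2 / p - 1) < 1 - δ (kS + S) := by
    rw [hkS, div_mul_cancel_right₀ (by positivity), inv_rpow hk0.le, ← div_eq_mul_inv,
      div_lt_iff₀ (by positivity)]
    linarith
  let T := univ.filter fun i => x i ≠ 0
  have hcone := sum_compl_abs_sub_rpow_le hp0 hp1 (T := T) (fun i hi => by simpa [T] using hi)
    (sum_abs_rpow_le_of_lpNorm_le hp0 hz)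
  refine sub_eq_zero.1 (eq_zero_of_mulVec_eq_zero_of_sum_compl_rpow_le A hp0 hp1 hkS0
    (fun c hc => (hRIP _ c hc).1) (fun c hc => (hRIP _ c hc).2) hab ?_ (isSparse_iff.1 hx) hcone)
  rw [Matrix.mulVec_sub, hAz, sub_self]
end

section
/- Let 0 < p < 1, L a positive integer, and let h ∈ ℝ^N be supported on T_0^c for an index set T_0. Let T_{01}^c denote the complement of the union of T_0 with the set T_1 of indices of the L largest-magnitude entries of h_{T_0^c}. Then ‖h_{T_{01}^c}‖_2^2 ≤ ‖h_{T_0^c}‖_p^2 / (L^{2/p − 1} (2/p − 1)). -/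
open Finset

/-- Bernoulli-type step: `(q-1) * (a+1)^(-q) ≤ a^(1-q) - (a+1)^(1-q)` for `a ≥ 1`, `q ≥ 1`. -/
lemma bernoulli_step {a q : ℝ} (ha : 1 ≤ a) (hq : 1 ≤ q) :
    (q - 1) * (a + 1) ^ (-q) ≤ a ^ (1 - q) - (a + 1) ^ (1 - q) := by
  have ha0 : 0 < a := lt_of_lt_of_le one_pos ha
  have hb0 : 0 < a + 1 := by linarith
  -- Bernoulli: (1 + 1/a)^q ≥ 1 + q/a
  have hbern : 1 + q * (1 / a) ≤ (1 + 1 / a) ^ q := by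
    have := one_add_mul_self_le_rpow_one_add (s := 1 / a)
      (le_trans (by norm_num : (-1 : ℝ) ≤ 0) (by positivity : (0 : ℝ) ≤ 1 / a)) hq
    simpa using this
  have hkey : a + q ≤ (a + 1) ^ q * a ^ (1 - q) := by
    have h1 : (1 + 1 / a) = (a + 1) / a := by field_simp
    have h2 : ((a + 1) / a) ^ q = (a + 1) ^ q / a ^ q :=
      Real.div_rpow hb0.le ha0.le q
    have haq : (0 : ℝ) < a ^ q := Real.rpow_pos_of_pos ha0 q
    have h3 : a * ((1 + 1 / a) ^ q) = (a + 1) ^ q * a ^ (1 - q) := by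
      rw [h1, h2, Real.rpow_sub ha0, Real.rpow_one]
      field_simp
    have h4 : a * (1 + q * (1 / a)) ≤ a * ((1 + 1 / a) ^ q) :=
      mul_le_mul_of_nonneg_left hbern ha0.le
    have h5 : a * (1 + q * (1 / a)) = a + q := by field_simp
    rw [h5, h3] at h4
    exact h4
  -- divide by (a+1)^q
  have hbq : (0 : ℝ) < (a + 1) ^ q := Real.rpow_pos_of_pos hb0 q
  have hbnq : (0 : ℝ) < (a + 1) ^ (-q) := Real.rpow_pos_of_pos hb0 (-q)
  have hqq : (a + 1) ^ q * (a + 1) ^ (-q) = 1 := by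
    rw [← Real.rpow_add hb0]; simp
  have hbsub : (a + 1) ^ (1 - q) = (a + 1) * (a + 1) ^ (-q) := by
    rw [show (1 : ℝ) - q = 1 + -q by ring, Real.rpow_add hb0, Real.rpow_one]
  have hineq : (a + q) * (a + 1) ^ (-q) ≤ a ^ (1 - q) := by
    calc (a + q) * (a + 1) ^ (-q)
        ≤ ((a + 1) ^ q * a ^ (1 - q)) * (a + 1) ^ (-q) :=
          mul_le_mul_of_nonneg_right hkey hbnq.le
      _ = a ^ (1 - q) * ((a + 1) ^ q * (a + 1) ^ (-q)) := by ring
      _ = a ^ (1 - q) := by rw [hqq, mul_one]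
  nlinarith [hbnq]

/-- Partial-sum bound for the tail of a `q`-series, `q > 1`. -/
lemma tail_sum_bound (q : ℝ) (hq : 1 < q) (L : ℕ) (hL : 0 < L) :
    ∀ n : ℕ, ∑ k ∈ range n, ((L : ℝ) + 1 + k) ^ (-q) ≤
      ((L : ℝ) ^ (1 - q) - ((L : ℝ) + n) ^ (1 - q)) / (q - 1) := by
  intro n
  induction n with
  | zero => simp
  | succ n ih =>
    rw [Finset.sum_range_succ]
    have ha : (1 : ℝ) ≤ (L : ℝ) + n := by
      have h1 : (1 : ℝ) ≤ (L : ℝ) := by exact_mod_cast hL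
      have h2 : (0 : ℝ) ≤ (n : ℝ) := Nat.cast_nonneg n
      linarith
    have hstep := bernoulli_step ha hq.le
    have hq1 : (0 : ℝ) < q - 1 := by linarith
    have hcast : ((L : ℝ) + 1 + (n : ℝ)) = ((L : ℝ) + n) + 1 := by ring
    have hcast2 : ((L : ℝ) + ((n : ℕ) + 1 : ℕ)) = ((L : ℝ) + n) + 1 := by push_cast; ring
    rw [hcast, hcast2]
    have hdiv : (((L : ℝ) + n) + 1) ^ (-q) ≤
        (((L : ℝ) + n) ^ (1 - q) - (((L : ℝ) + n) + 1) ^ (1 - q)) / (q - 1) := by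
      rw [le_div_iff₀ hq1]
      linarith
    calc ∑ k ∈ range n, ((L : ℝ) + 1 + k) ^ (-q) + (((L : ℝ) + n) + 1) ^ (-q)
        ≤ ((L : ℝ) ^ (1 - q) - ((L : ℝ) + n) ^ (1 - q)) / (q - 1)
            + (((L : ℝ) + n) ^ (1 - q) - (((L : ℝ) + n) + 1) ^ (1 - q)) / (q - 1) :=
          add_le_add ih hdiv
      _ = ((L : ℝ) ^ (1 - q) - (((L : ℝ) + n) + 1) ^ (1 - q)) / (q - 1) := by ring

/-- Main induction: if every element of `T₁` dominates every element of `B`,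
then the sum of squares over `B` is bounded. -/
lemma main_induction {N : ℕ} (p : ℝ) (hp0 : 0 < p) (h : Fin N → ℝ)
    (S : ℝ) (hS : S = ∑ i, |h i| ^ p) :
    ∀ n : ℕ, ∀ T₁ B : Finset (Fin N), B.card = n → Disjoint T₁ B →
      (∀ i ∈ T₁, ∀ j ∈ B, |h j| ≤ |h i|) →
      ∑ j ∈ B, (h j) ^ 2 ≤ ∑ k ∈ range n, (S / ((T₁.card : ℝ) + 1 + k)) ^ (2 / p) := by
  intro n
  induction n with
  | zero =>
    intro T₁ B hcard _ _
    rw [Finset.card_eq_zero.mp hcard]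
    simp
  | succ n ih =>
    intro T₁ B hcard hdisj hdom
    have hBne : B.Nonempty := Finset.card_pos.mp (by omega)
    obtain ⟨j₀, hj₀B, hj₀max⟩ := B.exists_max_image (fun j => |h j|) hBne
    have hj₀T₁ : j₀ ∉ T₁ := fun hmem => (Finset.disjoint_left.mp hdisj hmem) hj₀B
    have hSnn : 0 ≤ S := by
      rw [hS]; exact Finset.sum_nonneg fun i _ => Real.rpow_nonneg (abs_nonneg _) p
    have hcardpos : (0 : ℝ) < (T₁.card : ℝ) + 1 := by positivity
    have hkey : |h j₀| ^ p ≤ S / ((T₁.card : ℝ) + 1) := by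
      rw [le_div_iff₀ hcardpos]
      have h1 := Finset.card_nsmul_le_sum (insert j₀ T₁) (fun i => |h i| ^ p) (|h j₀| ^ p)
        (fun i hi => by
          rcases Finset.mem_insert.mp hi with rfl | hi
          · exact le_refl _
          · exact Real.rpow_le_rpow (abs_nonneg _) (hdom i hi j₀ hj₀B) hp0.le)
      have h2 : ∑ i ∈ insert j₀ T₁, |h i| ^ p ≤ S := by
        rw [hS]
        exact Finset.sum_le_sum_of_subset_of_nonneg (Finset.subset_univ _)
          (fun i _ _ => Real.rpow_nonneg (abs_nonneg _) p)
      rw [Finset.card_insert_of_notMem hj₀T₁, nsmul_eq_mul] at h1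
      push_cast at h1
      calc |h j₀| ^ p * ((T₁.card : ℝ) + 1)
          = ((T₁.card : ℝ) + 1) * (|h j₀| ^ p) := by ring
        _ ≤ S := le_trans h1 h2
    have hsq : (h j₀) ^ 2 ≤ (S / ((T₁.card : ℝ) + 1)) ^ (2 / p) := by
      have hp' : p * (2 / p) = 2 := by field_simp
      have he : (h j₀) ^ 2 = (|h j₀| ^ p) ^ (2 / p) := by
        rw [← Real.rpow_mul (abs_nonneg _), hp']
        rw [show ((2 : ℝ) : ℝ) = ((2 : ℕ) : ℝ) by norm_num, Real.rpow_natCast, sq_abs]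
      rw [he]
      exact Real.rpow_le_rpow (Real.rpow_nonneg (abs_nonneg _) p) hkey (by positivity)
    -- apply IH
    have hcard' : (B.erase j₀).card = n := by
      rw [Finset.card_erase_of_mem hj₀B, hcard]
      omega
    have hdisj' : Disjoint (insert j₀ T₁) (B.erase j₀) := by
      rw [Finset.disjoint_left]
      intro i hi hi'
      rcases Finset.mem_insert.mp hi with rfl | hi
      · exact (Finset.notMem_erase i B) hi'
      · exact (Finset.disjoint_left.mp hdisj hi) (Finset.mem_of_mem_erase hi')
    have hdom' : ∀ i ∈ insert j₀ T₁, ∀ j ∈ B.erase j₀, |h j| ≤ |h i| := by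
      intro i hi j hj
      rcases Finset.mem_insert.mp hi with rfl | hi
      · exact hj₀max j (Finset.mem_of_mem_erase hj)
      · exact hdom i hi j (Finset.mem_of_mem_erase hj)
    have hih := ih (insert j₀ T₁) (B.erase j₀) hcard' hdisj' hdom'
    rw [Finset.card_insert_of_notMem hj₀T₁] at hih
    have hsplit : ∑ j ∈ B, (h j) ^ 2 = (h j₀) ^ 2 + ∑ j ∈ B.erase j₀, (h j) ^ 2 :=
      (Finset.add_sum_erase B (fun j => (h j) ^ 2) hj₀B).symm
    rw [hsplit, Finset.sum_range_succ']
    rw [add_comm ((h j₀) ^ 2)] at *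
    refine le_trans (add_le_add hih hsq) ?_
    refine add_le_add (le_of_eq (Finset.sum_congr rfl fun k _ => ?_)) (le_of_eq ?_)
    · congr 1
      push_cast
      ring
    · congr 1
      push_cast
      ring

theorem tail_error_bound {N : ℕ} (p : ℝ) (hp0 : 0 < p) (hp1 : p < 1)
    (L : ℕ) (hL : 0 < L) (h : Fin N → ℝ)
    (T₀ T₁ : Finset (Fin N))
    (hsupp : ∀ i ∈ T₀, h i = 0)
    (hT₁sub : T₁ ⊆ T₀ᶜ) (hT₁card : T₁.card = L)
    (hT₁big : ∀ i ∈ T₁, ∀ j ∈ T₀ᶜ \ T₁, |h j| ≤ |h i|) :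
    ∑ i ∈ (T₀ ∪ T₁)ᶜ, (h i) ^ 2 ≤
      lpNorm p h ^ 2 / ((L : ℝ) ^ (2 / p - 1) * (2 / p - 1)) := by
  set S : ℝ := ∑ i, |h i| ^ p with hS
  set B : Finset (Fin N) := (T₀ ∪ T₁)ᶜ with hB
  have hSnn : 0 ≤ S := Finset.sum_nonneg fun i _ => Real.rpow_nonneg (abs_nonneg _) p
  have hq : (1 : ℝ) < 2 / p := by
    rw [lt_div_iff₀ hp0]; linarith
  -- B ⊆ T₀ᶜ \ T₁
  have hBsub : B ⊆ T₀ᶜ \ T₁ := by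
    intro j hj
    rw [hB, Finset.mem_compl, Finset.mem_union] at hj
    push_neg at hj
    rw [Finset.mem_sdiff, Finset.mem_compl]
    exact ⟨hj.1, hj.2⟩
  have hdisj : Disjoint T₁ B := by
    rw [Finset.disjoint_left]
    intro i hi hiB
    exact ((Finset.mem_sdiff.mp (hBsub hiB)).2) hi
  have hdom : ∀ i ∈ T₁, ∀ j ∈ B, |h j| ≤ |h i| :=
    fun i hi j hj => hT₁big i hi j (hBsub hj)
  have hmain := main_induction p hp0 h S hS B.card T₁ B rfl hdisj hdom
  rw [hT₁card] at hmain
  -- rewrite the RHS of hmain as S^(2/p) * ∑ (L+1+k)^(-(2/p))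
  have hterm : ∀ k : ℕ, (S / ((L : ℝ) + 1 + k)) ^ (2 / p)
      = S ^ (2 / p) * ((L : ℝ) + 1 + k) ^ (-(2 / p)) := by
    intro k
    have hd : (0 : ℝ) < (L : ℝ) + 1 + k := by positivity
    rw [Real.div_rpow hSnn hd.le, Real.rpow_neg hd.le, div_eq_mul_inv]
  have hsum : ∑ k ∈ range B.card, (S / ((L : ℝ) + 1 + k)) ^ (2 / p)
      = S ^ (2 / p) * ∑ k ∈ range B.card, ((L : ℝ) + 1 + k) ^ (-(2 / p)) := by
    rw [Finset.mul_sum]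
    exact Finset.sum_congr rfl fun k _ => hterm k
  have htail := tail_sum_bound (2 / p) hq L hL B.card
  have hq1 : (0 : ℝ) < 2 / p - 1 := by linarith
  have hLpos : (0 : ℝ) < (L : ℝ) := by exact_mod_cast hL
  have hLn : (0 : ℝ) < (L : ℝ) + B.card := by positivity
  have htail2 : ∑ k ∈ range B.card, ((L : ℝ) + 1 + k) ^ (-(2 / p))
      ≤ (L : ℝ) ^ (1 - 2 / p) / (2 / p - 1) := by
    refine le_trans htail ?_
    apply (div_le_div_iff_of_pos_right hq1).mpr
    have : (0 : ℝ) < ((L : ℝ) + B.card) ^ (1 - 2 / p) :=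
      Real.rpow_pos_of_pos hLn _
    linarith
  -- lpNorm^2 = S^(2/p)
  have hnorm : lpNorm p h ^ 2 = S ^ (2 / p) := by
    rw [lpNorm, ← hS]
    rw [show (S ^ (1 / p)) ^ 2 = (S ^ (1 / p)) ^ ((2 : ℕ) : ℝ) from (Real.rpow_natCast _ 2).symm,
      ← Real.rpow_mul hSnn]
    congr 1
    ring
  -- final bound
  have hSq : (0 : ℝ) ≤ S ^ (2 / p) := Real.rpow_nonneg hSnn _
  have hfinal : S ^ (2 / p) * ((L : ℝ) ^ (1 - 2 / p) / (2 / p - 1))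
      = S ^ (2 / p) / ((L : ℝ) ^ (2 / p - 1) * (2 / p - 1)) := by
    rw [show (1 : ℝ) - 2 / p = -(2 / p - 1) by ring, Real.rpow_neg hLpos.le]
    field_simp
  calc ∑ i ∈ (T₀ ∪ T₁)ᶜ, (h i) ^ 2
      ≤ S ^ (2 / p) * ∑ k ∈ range B.card, ((L : ℝ) + 1 + k) ^ (-(2 / p)) := by
        rw [← hsum]; exact hmain
    _ ≤ S ^ (2 / p) * ((L : ℝ) ^ (1 - 2 / p) / (2 / p - 1)) :=
        mul_le_mul_of_nonneg_left htail2 hSq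
    _ = S ^ (2 / p) / ((L : ℝ) ^ (2 / p - 1) * (2 / p - 1)) := hfinal
    _ = lpNorm p h ^ 2 / ((L : ℝ) ^ (2 / p - 1) * (2 / p - 1)) := by rw [hnorm]
end

section
/- Let 0 < p ≤ 1 and suppose S_1 ∈ ℕ and k > 1 with kS_1 ∈ ℕ satisfy δ_{(k+1)S_1} < (k−1)/(k+1), where δ denotes the restricted isometry constants of a matrix A. Then with S_p = ⌊(k+1)S_1 / (k^{p/(2−p)} + 1)⌋, there exists ℓ ≥ k^{p/(2−p)} with (ℓ+1)S_p = (k+1)S_1 and δ_{(ℓ+1)S_p} < (ℓ^{(2−p)/p} − 1)/(ℓ^{(2−p)/p} + 1). -/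
/-!
Put `q = p / (2 - p) ∈ (0, 1]`, so that `(2 - p) / p = q⁻¹`. The number `ℓ` is forced by
`(ℓ + 1) S_p = (k + 1) S₁`; since `S_p` is the floor of `(k + 1) S₁ / (k^q + 1)`, this gives
`ℓ ≥ k^q`, i.e. `ℓ^{q⁻¹} ≥ k`. As `x ↦ (x - 1) / (x + 1)` is increasing, the bound
`(k - 1) / (k + 1)` on `δ_{(k+1)S₁}` transfers to `(ℓ^{q⁻¹} - 1) / (ℓ^{q⁻¹} + 1)`.
-/

lemma sub_one_div_add_one_le_sub_one_div_add_one {x y : ℝ} (hx : 0 < x + 1) (hxy : x ≤ y) :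
    (x - 1) / (x + 1) ≤ (y - 1) / (y + 1) := by
  rw [div_le_div_iff₀ hx (by linarith)]
  nlinarith

lemma exists_le_add_one_mul_floor_div_eq {a X : ℝ} (ha : 0 < a + 1) (haX : a + 1 ≤ X) :
    ∃ ℓ : ℝ, a ≤ ℓ ∧ (ℓ + 1) * (⌊X / (a + 1)⌋₊ : ℝ) = X := by
  set S : ℕ := ⌊X / (a + 1)⌋₊
  have hS : (1 : ℝ) ≤ S := by
    exact_mod_cast (Nat.one_le_floor_iff _).mpr ((one_le_div ha).mpr haX)
  have hSX : (S : ℝ) * (a + 1) ≤ X :=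
    (le_div_iff₀ ha).mp (Nat.floor_le (div_nonneg (by linarith) ha.le))
  refine ⟨X / S - 1, ?_, by field_simp; ring⟩
  rw [le_sub_iff_add_le, le_div_iff₀ (by linarith)]
  linarith

theorem rel_Sp_S1_general (p : ℝ) (hp0 : 0 < p) (hp1 : p ≤ 1)
    (δ : ℕ → ℝ)
    (S₁ : ℕ) (hS₁ : 0 < S₁) (k : ℝ) (hk : 1 < k)
    (kS₁ : ℕ)
    (hcond : δ (kS₁ + S₁) < (k - 1) / (k + 1)) :
    ∃ ℓ : ℝ, k ^ (p / (2 - p)) ≤ ℓ ∧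
      (ℓ + 1) * (↑(⌊(k + 1) * S₁ / (k ^ (p / (2 - p)) + 1)⌋₊) : ℝ) = (k + 1) * S₁ ∧
      δ (kS₁ + S₁) < (ℓ ^ ((2 - p) / p) - 1) / (ℓ ^ ((2 - p) / p) + 1) := by
  set q := p / (2 - p)
  have hq0 : 0 < q := div_pos hp0 (by linarith)
  have hq1 : q ≤ 1 := (div_le_one (by linarith)).mpr (by linarith)
  have hkq : 0 < k ^ q := Real.rpow_pos_of_pos (by linarith) q
  have hkqk : k ^ q ≤ k := Real.rpow_le_self_of_one_le hk.le hq1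
  have hS₁ : (1 : ℝ) ≤ S₁ := by exact_mod_cast hS₁
  obtain ⟨ℓ, hℓ, hmul⟩ := exists_le_add_one_mul_floor_div_eq (a := k ^ q) (X := (k + 1) * S₁)
    (by linarith) (by nlinarith)
  refine ⟨ℓ, hℓ, hmul, hcond.trans_le ?_⟩
  have hkℓ : k ≤ ℓ ^ q⁻¹ :=
    (Real.le_rpow_inv_iff_of_pos (by linarith) (by linarith) hq0).mpr hℓ
  rw [← inv_div p]
  exact sub_one_div_add_one_le_sub_one_div_add_one (by linarith) hkℓ

theorem rel_Sp_S1 (p : ℝ) (hp0 : 0 < p) (hp1 : p ≤ 1)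
    (δ : ℕ → ℝ) (hmono : Monotone δ)
    (S₁ : ℕ) (hS₁ : 0 < S₁) (k : ℝ) (hk : 1 < k)
    (kS₁ : ℕ) (hkS₁ : (kS₁ : ℝ) = k * S₁)
    (hcond : δ (kS₁ + S₁) < (k - 1) / (k + 1)) :
    ∃ ℓ : ℝ, k ^ (p / (2 - p)) ≤ ℓ ∧
      (ℓ + 1) * (↑(⌊(k + 1) * S₁ / (k ^ (p / (2 - p)) + 1)⌋₊) : ℝ) = (k + 1) * S₁ ∧
      δ (kS₁ + S₁) < (ℓ ^ ((2 - p) / p) - 1) / (ℓ ^ ((2 - p) / p) + 1) :=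
  rel_Sp_S1_general p hp0 hp1 δ S₁ hS₁ k hk kS₁ hcond
end

section
/- Let 0 < p < 1 and let K ⊆ ℝ^n be a p-convex body with conv(K) ⊆ B_2^n. Then d_1(K, B_2^n) ≤ C(p) · d_1(conv(K), B_2^n)^{2/p − 1}, where C(p) = (2^{1−p} + (1−p)2^{1−p/2}/p)^{(2−p)/p^2} · (1/((1−p) log 2))^{(2−2p)/p^2} and for K ⊆ B, d_1(K,B) := inf{λ > 0 : (1/λ)B ⊆ K ⊆ B}. -/
/-!
Let `a` be the radius of the largest ball about `0` inside `K`, so that `d₁(K, B) ≤ 1/a`. By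
Maurey's empirical method every `x ∈ conv K` lies within `2/√N` of an average `N⁻¹ ∑ fᵢ` of `N`
points of `K`. For `θ > 0`, `p`-convexity puts `∑ (θ/N) fᵢ` in `(θᵖ N^{1-p})^{1/p} K`, while the
error `θ (x - N⁻¹ ∑ fᵢ)` lies in the ball of radius `2θ/√N`, hence in `(2θ/(a√N)) K`; combining
the two by `p`-convexity once more gives `θ x ∈ K` as soon as `θᵖ (N^{1-p} + (2/(a√N))ᵖ) = 1`.
So `θ conv K ⊆ K`, and maximality of `a` yields `θ ≤ a d₁(conv K, B)`. Taking `N` to be about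
`M = (a^{-p} / ((1-p) log 2))^{2/(2-p)}`, which balances the two terms, and solving for `1/a`
gives the bound.
-/

open scoped Pointwise

/-- `d₁(K, B) = inf {λ > 0 : (1/λ) B ⊆ K ⊆ B}`, for `K ⊆ B`. -/
noncomputable def d1 {n : ℕ} (K B : Set (EuclideanSpace ℝ (Fin n))) : ℝ :=
  sInf {l : ℝ | 0 < l ∧ l⁻¹ • B ⊆ K ∧ K ⊆ B}

open Metric Real

section PConvex

variable {E : Type*} [AddCommGroup E] [Module ℝ E]

def IsPConvex (p : ℝ) (K : Set E) : Prop :=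
  ∀ x ∈ K, ∀ y ∈ K, ∀ l m : ℝ, l ∈ Set.Icc (0 : ℝ) 1 → m ∈ Set.Icc (0 : ℝ) 1 →
    l ^ p + m ^ p = 1 → l • x + m • y ∈ K

variable {p : ℝ} {K : Set E}

theorem IsPConvex.add_mem_smul (hK : IsPConvex p K) (hp : 0 < p) (h0 : (0 : E) ∈ K)
    {l m : ℝ} (hl : 0 ≤ l) (hm : 0 ≤ m) {x y : E} (hx : x ∈ l • K) (hy : y ∈ m • K) :
    x + y ∈ (l ^ p + m ^ p) ^ p⁻¹ • K := by
  obtain ⟨x, hx, rfl⟩ := hx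
  obtain ⟨y, hy, rfl⟩ := hy
  set u := (l ^ p + m ^ p) ^ p⁻¹
  have hu : u ^ p = l ^ p + m ^ p := rpow_inv_rpow (by positivity) hp.ne'
  rcases (show 0 ≤ u by positivity).eq_or_lt with hu0 | hu0
  · have hlm : l ^ p + m ^ p = 0 := by rw [← hu, ← hu0, zero_rpow hp.ne']
    rw [add_eq_zero_iff_of_nonneg (by positivity) (by positivity), rpow_eq_zero hl hp.ne',
      rpow_eq_zero hm hp.ne'] at hlm
    simpa [hlm.1, hlm.2] using Set.zero_mem_smul_set h0
  have hle {t : ℝ} (ht : 0 ≤ t) (htu : t ^ p ≤ u ^ p) : t / u ∈ Set.Icc (0 : ℝ) 1 :=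
    ⟨by positivity, div_le_one_of_le₀ ((rpow_le_rpow_iff ht hu0.le hp).1 htu) hu0.le⟩
  have hsum : (l / u) ^ p + (m / u) ^ p = 1 := by
    rw [div_rpow hl hu0.le, div_rpow hm hu0.le, ← add_div, ← hu,
      div_self (rpow_pos_of_pos hu0 p).ne']
  convert Set.smul_mem_smul_set (a := u) (hK x hx y hy _ _
    (hle hl (by rw [hu]; linarith [rpow_nonneg hm p]))
    (hle hm (by rw [hu]; linarith [rpow_nonneg hl p])) hsum) using 1
  simp only [smul_add, smul_smul, mul_div_cancel₀ _ hu0.ne']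

theorem IsPConvex.sum_smul_mem (hK : IsPConvex p K) (hp : 0 < p) (h0 : (0 : E) ∈ K)
    {ι : Type*} (s : Finset ι) {w : ι → ℝ} {f : ι → E} (hw : ∀ i ∈ s, 0 ≤ w i)
    (hf : ∀ i ∈ s, f i ∈ K) : ∑ i ∈ s, w i • f i ∈ (∑ i ∈ s, w i ^ p) ^ p⁻¹ • K := by
  induction s using Finset.cons_induction with
  | empty => simpa using Set.zero_mem_smul_set h0
  | cons i s hi ih =>
    simp only [Finset.mem_cons, forall_eq_or_imp] at hw hf
    rw [Finset.sum_cons, Finset.sum_cons]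
    have hs : 0 ≤ ∑ j ∈ s, w j ^ p := Finset.sum_nonneg fun j hj => rpow_nonneg (hw.2 j hj) p
    have := hK.add_mem_smul hp h0 hw.1 (by positivity) (Set.smul_mem_smul_set hf.1)
      (ih hw.2 hf.2)
    rwa [rpow_inv_rpow hs hp.ne'] at this

end PConvex

section InnerProductSpace

variable {E : Type*} [NormedAddCommGroup E] [InnerProductSpace ℝ E]

theorem exists_norm_sum_sub_nsmul_sq_le_of_mem_convexHull {K : Set E} {x : E} {r : ℝ}
    (hx : x ∈ convexHull ℝ K) (hr : ∀ y ∈ K, ‖y - x‖ ≤ r) (N : ℕ) :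
    ∃ f : Fin N → E, (∀ i, f i ∈ K) ∧ ‖∑ i, f i - N • x‖ ^ 2 ≤ N * r ^ 2 := by
  induction N with
  | zero => exact ⟨Fin.elim0, fun i => i.elim0, by simp⟩
  | succ N ih =>
    obtain ⟨f, hfK, hf⟩ := ih
    set v := ∑ i, f i - N • x
    obtain ⟨y, hyK, hyv⟩ := ((innerₛₗ ℝ v).concaveOn
      (convex_convexHull ℝ K)).exists_le_of_mem_convexHull (subset_convexHull ℝ K) hx
    refine ⟨Fin.snoc f y, Fin.forall_fin_succ'.2 ⟨by simpa using hfK, by simpa using hyK⟩, ?_⟩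
    have hsplit : ∑ i, Fin.snoc f y i - (N + 1) • x = v + (y - x) := by
      rw [Fin.sum_snoc, succ_nsmul]; simp only [v]; abel
    have hinner : inner ℝ v (y - x) ≤ 0 := by
      simpa [inner_sub_right] using hyv
    have hy : ‖y - x‖ ^ 2 ≤ r ^ 2 := pow_le_pow_left₀ (norm_nonneg _) (hr y hyK) 2
    rw [hsplit, norm_add_sq_real]
    push_cast
    linarith

theorem IsPConvex.smul_convexHull_subset {p a : ℝ} {K : Set E} (hK : IsPConvex p K) (hp : 0 < p)
    (ha : 0 < a) (haK : closedBall 0 a ⊆ K) (hKB : convexHull ℝ K ⊆ closedBall 0 1)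
    {N : ℕ} (hN : 0 < N) :
    ((N : ℝ) ^ (1 - p) + (2 / (a * √N)) ^ p) ^ (-p⁻¹) • convexHull ℝ K ⊆ K := by
  rintro _ ⟨x, hx, rfl⟩
  have hN' : (0 : ℝ) < N := Nat.cast_pos.2 hN
  set φ := (N : ℝ) ^ (1 - p) + (2 / (a * √N)) ^ p
  set θ := φ ^ (-p⁻¹)
  have hθ : 0 < θ := by positivity
  have hθφ : θ ^ p * φ = 1 := by
    rw [← rpow_mul (by positivity), neg_mul, inv_mul_cancel₀ hp.ne', rpow_neg_one,
      inv_mul_cancel₀ (by positivity)]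
  have h0 : (0 : E) ∈ K := haK (mem_closedBall_self ha.le)
  have hxB : ‖x‖ ≤ 1 := by simpa using hKB hx
  obtain ⟨f, hfK, hf⟩ := exists_norm_sum_sub_nsmul_sq_le_of_mem_convexHull hx (r := 2)
    (fun y hy => by
      have hyB : ‖y‖ ≤ 1 := by simpa using hKB (subset_convexHull ℝ K hy)
      linarith [norm_sub_le y x]) N
  have hsplit : θ • x = ∑ i, (θ / N) • f i + (θ / N) • (N • x - ∑ i, f i) := by
    rw [smul_sub, ← Finset.smul_sum, add_sub_cancel, ← Nat.cast_smul_eq_nsmul ℝ, smul_smul,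
      div_mul_cancel₀ _ hN'.ne']
  have hmean : ∑ i, (θ / N) • f i ∈ (θ ^ p * N ^ (1 - p)) ^ p⁻¹ • K := by
    have := hK.sum_smul_mem hp h0 Finset.univ (w := fun _ => θ / N) (fun _ _ => by positivity)
      (fun i _ => hfK i)
    rw [Finset.sum_const, Finset.card_univ, Fintype.card_fin, nsmul_eq_mul] at this
    convert this using 3
    rw [div_rpow hθ.le hN'.le, rpow_sub hN', rpow_one]
    ring
  have herr : (θ / N) • (N • x - ∑ i, f i) ∈ (θ * (2 / (a * √N))) • K := by
    refine Set.smul_set_mono haK ?_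
    rw [smul_closedBall _ _ ha.le, smul_zero, mem_closedBall_zero_iff, norm_smul, norm_sub_rev]
    have : ‖∑ i, f i - N • x‖ ≤ 2 * √N := by
      simpa [Real.sqrt_mul', Real.sqrt_sq, mul_comm] using Real.abs_le_sqrt hf
    have hs : 0 < √(N : ℝ) := Real.sqrt_pos.2 hN'
    rw [norm_of_nonneg (by positivity), norm_of_nonneg (by positivity)]
    calc θ / N * ‖∑ i, f i - N • x‖ ≤ θ / N * (2 * √N) := by gcongr
      _ = θ * (2 / (a * √N)) * a := by
        field_simp
        rw [Real.sq_sqrt hN'.le]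
  have := hK.add_mem_smul hp h0 (by positivity) (by positivity) hmean herr
  rwa [rpow_inv_rpow (by positivity) hp.ne', mul_rpow hθ.le (by positivity), ← mul_add, hθφ,
    one_rpow, one_smul, ← hsplit] at this

end InnerProductSpace

theorem exists_maximal_closedBall_subset {E : Type*} [NormedAddCommGroup E] [NormedSpace ℝ E]
    [Nontrivial E] {K : Set E} (hK : IsClosed K) (h0 : (0 : E) ∈ interior K)
    (hKB : K ⊆ closedBall 0 1) :
    ∃ a, 0 < a ∧ a ≤ 1 ∧ closedBall 0 a ⊆ K ∧ ∀ t, closedBall 0 t ⊆ K → t ≤ a := by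
  set A := {t : ℝ | closedBall (0 : E) t ⊆ K}
  have hA1 : ∀ t ∈ A, t ≤ 1 := by
    intro t ht
    rcases lt_or_ge t 0 with ht0 | ht0
    · linarith
    obtain ⟨v, hv⟩ := exists_norm_eq E ht0
    simpa [hv] using hKB (ht (mem_closedBall_zero_iff.2 hv.le))
  obtain ⟨ε, hε, hεK⟩ := Metric.mem_nhds_iff.1 (mem_interior_iff_mem_nhds.1 h0)
  have hεA : ε / 2 ∈ A := (closedBall_subset_ball (by linarith)).trans hεK
  have hbdd : BddAbove A := ⟨1, hA1⟩
  have ha : 0 < sSup A := (half_pos hε).trans_le (le_csSup hbdd hεA)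
  refine ⟨sSup A, ha, csSup_le ⟨_, hεA⟩ hA1, ?_, fun t ht => le_csSup hbdd ht⟩
  rw [← closure_ball _ ha.ne']
  refine closure_minimal (fun y hy => ?_) hK
  obtain ⟨t, ht, hyt⟩ := exists_lt_of_lt_csSup ⟨_, hεA⟩ (mem_ball_zero_iff.1 hy)
  exact ht (mem_closedBall_zero_iff.2 hyt.le)

section D1

variable {n : ℕ}

theorem inv_mem_d1_set {K : Set (EuclideanSpace ℝ (Fin n))} {a : ℝ} (ha : 0 < a)
    (haK : closedBall 0 a ⊆ K) (hKB : K ⊆ closedBall 0 1) :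
    a⁻¹ ∈ {l : ℝ | 0 < l ∧ l⁻¹ • closedBall 0 1 ⊆ K ∧ K ⊆ closedBall 0 1} :=
  ⟨inv_pos.2 ha, by rwa [inv_inv, smul_unitClosedBall_of_nonneg ha.le], hKB⟩

theorem d1_le_inv {K : Set (EuclideanSpace ℝ (Fin n))} {a : ℝ} (ha : 0 < a)
    (haK : closedBall 0 a ⊆ K) (hKB : K ⊆ closedBall 0 1) : d1 K (closedBall 0 1) ≤ a⁻¹ :=
  csInf_le ⟨0, fun _ hl => hl.1.le⟩ (inv_mem_d1_set ha haK hKB)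

theorem le_mul_d1_of_smul_subset {K L : Set (EuclideanSpace ℝ (Fin n))} {a θ : ℝ} (ha : 0 < a)
    (haL : closedBall 0 a ⊆ L) (hLB : L ⊆ closedBall 0 1)
    (hmax : ∀ t, closedBall 0 t ⊆ K → t ≤ a) (hθ : θ • L ⊆ K) :
    θ ≤ a * d1 L (closedBall 0 1) := by
  rw [← div_le_iff₀' ha]
  refine le_csInf ⟨_, inv_mem_d1_set ha haL hLB⟩ fun l ⟨hl, hlL, _⟩ => ?_
  have hball : closedBall 0 ‖θ * l⁻¹‖ ⊆ K := by
    rw [← smul_unitClosedBall, ← smul_smul]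
    exact (Set.smul_set_mono hlL).trans hθ
  have := hmax _ hball
  rw [norm_mul, norm_inv, Real.norm_of_nonneg hl.le, ← div_eq_mul_inv, div_le_iff₀ hl] at this
  rw [div_le_iff₀' ha]
  exact (le_abs_self θ).trans (by rwa [← Real.norm_eq_abs])

theorem d1_eq_zero_of_dim_zero (K : Set (EuclideanSpace ℝ (Fin 0))) (h0 : (0 : _) ∈ K) :
    d1 K (closedBall 0 1) = 0 := by
  have hK : K = Set.univ := Subsingleton.eq_univ_of_nonempty ⟨0, h0⟩
  have : {l : ℝ | 0 < l ∧ l⁻¹ • closedBall (0 : EuclideanSpace ℝ (Fin 0)) 1 ⊆ K ∧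
      K ⊆ closedBall 0 1} = Set.Ioi 0 := by
    ext l
    simp [hK, Subsingleton.eq_univ_of_nonempty (⟨0, mem_closedBall_self zero_le_one⟩ :
      (closedBall (0 : EuclideanSpace ℝ (Fin 0)) 1).Nonempty)]
  rw [d1, this, csInf_Ioi]

end D1

theorem mul_log_two_mul_two_rpow_le {p : ℝ} (hp1 : p ≤ 1) :
    p * log 2 * 2 ^ p ≤ 2 ^ (1 - p / 2) := by
  have hsqrt : log 2 ≤ 2 ^ (-(1 / 2) : ℝ) := by
    have hs : 0 < √2 := by positivity
    rw [rpow_neg zero_le_two, ← sqrt_eq_rpow, ← one_div, le_div_iff₀ hs]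
    nlinarith [sq_sqrt (zero_le_two : (0 : ℝ) ≤ 2), log_two_lt_d9, log_pos one_lt_two]
  calc p * log 2 * 2 ^ p ≤ 2 ^ (1 - 3 * p / 2) * 2 ^ p := by
        gcongr
        calc p * log 2 ≤ log 2 := mul_le_of_le_one_left (log_pos one_lt_two).le hp1
          _ ≤ 2 ^ (-(1 / 2) : ℝ) := hsqrt
          _ ≤ 2 ^ (1 - 3 * p / 2) := rpow_le_rpow_of_exponent_le one_le_two (by linarith)
    _ = 2 ^ (1 - p / 2) := by rw [← rpow_add two_pos]; ring_nf

theorem two_rpow_div_le {p : ℝ} (hp0 : 0 < p) (hp1 : p < 1) :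
    2 ^ p / (1 / ((1 - p) * log 2)) ≤ (1 - p) * 2 ^ (1 - p / 2) / p := by
  rw [one_div, div_inv_eq_mul, le_div_iff₀ hp0]
  calc 2 ^ p * ((1 - p) * log 2) * p = (1 - p) * (p * log 2 * 2 ^ p) := by ring
    _ ≤ (1 - p) * 2 ^ (1 - p / 2) :=
      mul_le_mul_of_nonneg_left (mul_log_two_mul_two_rpow_le hp1.le) (by linarith)

theorem exists_nat_rpow_add_le {p a L : ℝ} (hp0 : 0 < p) (hp1 : p < 1) (ha0 : 0 < a)
    (ha1 : a ≤ 1) (hL : 1 ≤ L) :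
    ∃ N : ℕ, 0 < N ∧ (N : ℝ) ^ (1 - p) + (2 / (a * √N)) ^ p ≤
      (2 ^ (1 - p) + 2 ^ p / L) * ((a ^ (-p) * L) ^ (2 / (2 - p))) ^ (1 - p) := by
  set M := (a ^ (-p) * L) ^ (2 / (2 - p))
  have hL0 : 0 < L := by linarith
  have hM1 : 1 ≤ M := one_le_rpow (one_le_mul_of_one_le_of_one_le
    (one_le_rpow_of_pos_of_le_one_of_nonpos ha0 ha1 (by linarith)) hL)
    (div_nonneg zero_le_two (by linarith))
  have hM0 : 0 < M := by linarith
  have h2p : 2 - p ≠ 0 := by linarith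
  have hML : a ^ p * M ^ (1 - p) * M ^ (p / 2) = L := by
    rw [mul_assoc, ← rpow_add hM0, ← rpow_mul (by positivity),
      show 2 / (2 - p) * (1 - p + p / 2) = 1 by field_simp; ring, rpow_one, ← mul_assoc,
      ← rpow_add ha0, add_neg_cancel, rpow_zero, one_mul]
  refine ⟨⌈M⌉₊, Nat.ceil_pos.2 (by linarith), ?_⟩
  have hMN : M ≤ ⌈M⌉₊ := Nat.le_ceil M
  have hN2 : (⌈M⌉₊ : ℝ) ≤ 2 * M := by linarith [Nat.ceil_lt_add_one hM0.le]
  have hmean : (⌈M⌉₊ : ℝ) ^ (1 - p) ≤ 2 ^ (1 - p) * M ^ (1 - p) := by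
    rw [← mul_rpow zero_le_two hM0.le]
    exact rpow_le_rpow (by positivity) hN2 (by linarith)
  have herr : (2 / (a * √⌈M⌉₊)) ^ p ≤ 2 ^ p / L * M ^ (1 - p) :=
    calc (2 / (a * √⌈M⌉₊)) ^ p ≤ (2 / (a * √M)) ^ p := by gcongr
      _ = 2 ^ p / L * M ^ (1 - p) := by
        rw [← hML, div_rpow zero_le_two (by positivity), mul_rpow ha0.le (by positivity),
          sqrt_eq_rpow, ← rpow_mul hM0.le]
        field_simp
  linarith

theorem inv_le_of_rpow_neg_inv_le {p a D φ A L : ℝ} (hp0 : 0 < p) (hp2 : p < 2) (ha : 0 < a)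
    (hφ0 : 0 < φ) (hL : 0 < L) (hφ : φ ≤ A * ((a ^ (-p) * L) ^ (2 / (2 - p))) ^ (1 - p))
    (hθ : φ ^ (-p⁻¹) ≤ a * D) :
    a⁻¹ ≤ A ^ ((2 - p) / p ^ 2) * L ^ ((2 - 2 * p) / p ^ 2) * D ^ (2 / p - 1) := by
  have hD : 0 < D := pos_of_mul_pos_right ((rpow_pos_of_pos hφ0 _).trans_le hθ) ha.le
  have hA : 0 < A := pos_of_mul_pos_left (hφ0.trans_le hφ) (by positivity)
  have hlogθ := log_le_log (by positivity) hθ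
  have hlogφ := log_le_log hφ0 hφ
  rw [log_rpow hφ0, log_mul ha.ne' hD.ne'] at hlogθ
  rw [log_mul hA.ne' (by positivity), log_rpow (by positivity), log_rpow (by positivity),
    log_mul (by positivity) hL.ne', log_rpow ha] at hlogφ
  rw [← log_le_log_iff (by positivity) (by positivity), log_inv, log_mul (by positivity)
    (by positivity), log_mul (by positivity) (by positivity), log_rpow hA, log_rpow hL,
    log_rpow hD]
  have hq : 0 < 2 - p := by linarith
  have h2p : 2 - p ≠ 0 := hq.ne'
  have key : (2 - p) / p ^ 2 * log A + (2 - 2 * p) / p ^ 2 * log L + (2 / p - 1) * log D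
      + log a = (2 - p) / p ^ 2 * (log A + (1 - p) * (2 / (2 - p) * (-p * log a + log L))
        - log φ) + (2 - p) / p * (log a + log D - -p⁻¹ * log φ) := by
    field_simp
    ring
  linarith [mul_nonneg (div_nonneg hq.le (sq_nonneg p)) (sub_nonneg.2 hlogφ),
    mul_nonneg (div_nonneg hq.le hp0.le) (sub_nonneg.2 hlogθ)]

theorem pConvex_dist_to_ball_general {n : ℕ} (p : ℝ) (hp0 : 0 < p) (hp1 : p < 1)
    (K : Set (EuclideanSpace ℝ (Fin n)))
    (hcomp : IsCompact K)
    (h0 : (0 : EuclideanSpace ℝ (Fin n)) ∈ interior K)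
    (hpconv : ∀ x ∈ K, ∀ y ∈ K, ∀ l m : ℝ, l ∈ Set.Icc (0 : ℝ) 1 → m ∈ Set.Icc (0 : ℝ) 1 →
      l ^ p + m ^ p = 1 → l • x + m • y ∈ K)
    (hKB : convexHull ℝ K ⊆ Metric.closedBall (0 : EuclideanSpace ℝ (Fin n)) 1) :
    d1 K (Metric.closedBall 0 1) ≤
      ((2 ^ (1 - p) + (1 - p) * 2 ^ (1 - p / 2) / p) ^ ((2 - p) / p ^ 2) *
          (1 / ((1 - p) * Real.log 2)) ^ ((2 - 2 * p) / p ^ 2)) *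
        d1 (convexHull ℝ K) (Metric.closedBall 0 1) ^ (2 / p - 1) := by
  have h0K : (0 : EuclideanSpace ℝ (Fin n)) ∈ K := interior_subset h0
  rcases n.eq_zero_or_pos with rfl | hn
  · have hexp : 2 / p - 1 ≠ 0 := (sub_pos.2 ((lt_div_iff₀ hp0).2 (by linarith))).ne'
    rw [d1_eq_zero_of_dim_zero K h0K, d1_eq_zero_of_dim_zero _ (subset_convexHull ℝ K h0K),
      zero_rpow hexp, mul_zero]
  have : Nonempty (Fin n) := ⟨⟨0, hn⟩⟩
  have hKB1 : K ⊆ closedBall 0 1 := (subset_convexHull ℝ K).trans hKB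
  obtain ⟨a, ha0, ha1, haK, hmax⟩ := exists_maximal_closedBall_subset hcomp.isClosed h0 hKB1
  have hlog : 0 < (1 - p) * log 2 := mul_pos (by linarith) (log_pos one_lt_two)
  have hL : 1 ≤ 1 / ((1 - p) * log 2) := by
    rw [le_div_iff₀ hlog]
    nlinarith [log_two_lt_d9]
  obtain ⟨N, hN, hφ⟩ := exists_nat_rpow_add_le hp0 hp1 ha0 ha1 hL
  have hθ := le_mul_d1_of_smul_subset ha0 (haK.trans (subset_convexHull ℝ K)) hKB hmax
    (IsPConvex.smul_convexHull_subset hpconv hp0 ha0 haK hKB hN)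
  refine (d1_le_inv ha0 haK hKB1).trans (inv_le_of_rpow_neg_inv_le hp0 (by linarith) ha0
    (by positivity) (by linarith) (hφ.trans ?_) hθ)
  gcongr (2 ^ (1 - p) + ?_) * _
  exact two_rpow_div_le hp0 hp1

theorem pConvex_dist_to_ball {n : ℕ} (p : ℝ) (hp0 : 0 < p) (hp1 : p < 1)
    (K : Set (EuclideanSpace ℝ (Fin n)))
    (hcomp : IsCompact K)
    (h0 : (0 : EuclideanSpace ℝ (Fin n)) ∈ interior K)
    (hstar : ∀ x ∈ K, ∀ t : ℝ, t ∈ Set.Icc (0 : ℝ) 1 → t • x ∈ K)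
    (hpconv : ∀ x ∈ K, ∀ y ∈ K, ∀ l m : ℝ, l ∈ Set.Icc (0 : ℝ) 1 → m ∈ Set.Icc (0 : ℝ) 1 →
      l ^ p + m ^ p = 1 → l • x + m • y ∈ K)
    (hKB : convexHull ℝ K ⊆ Metric.closedBall (0 : EuclideanSpace ℝ (Fin n)) 1) :
    d1 K (Metric.closedBall 0 1) ≤
      ((2 ^ (1 - p) + (1 - p) * 2 ^ (1 - p / 2) / p) ^ ((2 - p) / p ^ 2) *
          (1 / ((1 - p) * Real.log 2)) ^ ((2 - 2 * p) / p ^ 2)) *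
        d1 (convexHull ℝ K) (Metric.closedBall 0 1) ^ (2 / p - 1) :=
  pConvex_dist_to_ball_general p hp0 hp1 K hcomp h0 hpconv hKB
end
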